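/- arXiv:2312.06191 — 3 statements merged into one kernel-verified Lean document; each statement's English description precedes it below -/
import Mathlib

section
/- For all η ∈ (0, 2π), the quantity (16 - 5π)/√((16-5π)² + 128(16+15π)(1-cos η) + 256(16-5π)(1-cos η)²) is strictly less than 1/(5 - 4·cos η). -/
/-! With `t = 1 - cos η > 0` and `a = 16 - 5π`, one has `5 - 4 cos η = 1 + 4t`, and the claim
becomes `a² (1 + 4t)² < a² + 128 (16 + 15π) t + 256 a t²`. Comparing coefficients of `t` and `t²`,
this holds because `a² < 16 (16 + 15π)` and `a ≤ 16`. -/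

open Real

lemma div_sqrt_lt_one_div_one_add {a b t : ℝ} (ha : 0 < a) (ha16 : a ≤ 16)
    (hab : a ^ 2 < 16 * b) (ht : 0 < t) :
    a / √(a ^ 2 + 128 * b * t + 256 * a * t ^ 2) < 1 / (1 + 4 * t) := by
  have hlt : a * (1 + 4 * t) < √(a ^ 2 + 128 * b * t + 256 * a * t ^ 2) := by
    apply lt_sqrt_of_sq_lt
    have hlin : 8 * a ^ 2 * t < 128 * b * t := by nlinarith
    have hquad : 16 * a ^ 2 * t ^ 2 ≤ 256 * a * t ^ 2 := by
      nlinarith [mul_nonneg (mul_nonneg ha.le (sq_nonneg t)) (sub_nonneg.2 ha16)]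
    nlinarith
  have hsqrt : 0 < √(a ^ 2 + 128 * b * t + 256 * a * t ^ 2) := by
    have : 0 < a * (1 + 4 * t) := by positivity
    linarith
  rw [div_lt_div_iff₀ hsqrt (by linarith)]
  linarith

lemma cos_lt_one_of_mem_Ioo {η : ℝ} (hη : η ∈ Set.Ioo 0 (2 * π)) : cos η < 1 := by
  refine (cos_le_one η).lt_of_ne fun h => ?_
  have := (cos_eq_one_iff_of_lt_of_lt (by linarith [pi_pos, hη.1]) hη.2).1 h
  exact hη.1.ne' this

theorem stmt_1 (η : ℝ) (hη : η ∈ Set.Ioo 0 (2 * π)) :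
    (16 - 5 * π) /
      Real.sqrt ((16 - 5 * π) ^ 2 + 128 * (16 + 15 * π) * (1 - Real.cos η)
        + 256 * (16 - 5 * π) * (1 - Real.cos η) ^ 2)
      < 1 / (5 - 4 * Real.cos η) := by
  have hpi_lo : 3 < π := pi_gt_three
  have hpi_hi : π < 3.15 := pi_lt_d2
  have hcos := cos_lt_one_of_mem_Ioo hη
  rw [show 5 - 4 * cos η = 1 + 4 * (1 - cos η) by ring]
  exact div_sqrt_lt_one_div_one_add (by linarith) (by linarith) (by nlinarith) (by linarith)
end

section
/- For the Hermite moment system with A the tridiagonal matrix (A[i][i+1]=i+1, A[i+1][i]=1) and L = diag(0,0,0,-1,…,-1), the matrix |A| - (Δx/ε)L is invertible for all ε, Δx > 0, provided that the restriction of |A| to the span of the first three coordinate directions has trivial kernel intersection with ker L. -/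
open Matrix

/-- For the Hermite moment system, with `A` the Hermite Jacobi matrix and
`L = diag(0,0,0,-1,…,-1)`, the matrix `|A| - (Δx/ε) L` is invertible for all
`ε, Δx > 0`, provided that the restriction of `|A|` to the span of the first three
coordinate directions (which is `ker L`) has trivial kernel. -/
theorem stmt_10 (N : ℕ)
    (A : Matrix (Fin (N + 1)) (Fin (N + 1)) ℝ)
    (hA : ∀ i j : Fin (N + 1), A i j =
      if (j : ℕ) = (i : ℕ) + 1 then ((i : ℕ) + 1 : ℝ)
      else if (i : ℕ) = (j : ℕ) + 1 then 1 else 0)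
    (L : Matrix (Fin (N + 1)) (Fin (N + 1)) ℝ)
    (hL : L = Matrix.diagonal (fun i : Fin (N + 1) => if (i : ℕ) < 3 then (0 : ℝ) else -1))
    (R : Matrix (Fin (N + 1)) (Fin (N + 1)) ℝ) (d : Fin (N + 1) → ℝ)
    (hR : IsUnit R.det)
    (hdecomp : A = R * Matrix.diagonal d * R⁻¹)
    (absA : Matrix (Fin (N + 1)) (Fin (N + 1)) ℝ)
    (habs : absA = R * Matrix.diagonal (fun i => |d i|) * R⁻¹)
    (hker : ∀ x : Fin (N + 1) → ℝ, (∀ i : Fin (N + 1), 3 ≤ (i : ℕ) → x i = 0) →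
      absA *ᵥ x = 0 → x = 0)
    (ε Δx : ℝ) (hε : 0 < ε) (hΔx : 0 < Δx) :
    IsUnit (absA - (Δx / ε) • L).det := by
  set c : ℝ := Δx / ε with hc
  have hcpos : 0 < c := div_pos hΔx hε
  set w : Fin (N + 1) → ℝ := fun i => (((i : ℕ).factorial) : ℝ) with hw
  have hwpos : ∀ i, 0 < w i := by
    intro i
    show (0:ℝ) < (((i:ℕ).factorial : ℕ) : ℝ)
    exact_mod_cast Nat.factorial_pos _
  have hquad : ∀ u : Fin (N + 1) → ℝ,
      u ⬝ᵥ (Matrix.diagonal w *ᵥ u) = ∑ i, w i * u i ^ 2 := by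
    intro u
    simp only [dotProduct, Matrix.mulVec_diagonal]
    exact Finset.sum_congr rfl (fun i _ => by ring)
  -- symmetrization of A
  have hWA : Matrix.diagonal w * A = Aᵀ * Matrix.diagonal w := by
    show Matrix.diagonal (fun i : Fin (N+1) => (((i:ℕ).factorial) : ℝ)) * A
        = Aᵀ * Matrix.diagonal (fun i : Fin (N+1) => (((i:ℕ).factorial) : ℝ))
    ext i j
    simp only [Matrix.diagonal_mul, Matrix.mul_diagonal, Matrix.transpose_apply, hA]
    by_cases h1 : (j:ℕ) = (i:ℕ)+1
    · have h2 : ¬ ((i:ℕ) = (j:ℕ)+1) := by omega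
      simp only [h1, h2, if_true, if_false, if_neg (by omega : ¬ ((i:ℕ) = (i:ℕ)+1+1))]
      rw [Nat.factorial_succ]
      push_cast; ring
    · by_cases h2 : (i:ℕ) = (j:ℕ)+1
      · simp only [h1, h2, if_true, if_false, if_neg (by omega : ¬ ((j:ℕ) = (j:ℕ)+1+1))]
        rw [Nat.factorial_succ]
        push_cast; ring
      · simp [h1, h2]
  have hRR : R⁻¹ * R = 1 := Matrix.nonsing_inv_mul R hR
  have hRR' : R * R⁻¹ = 1 := Matrix.mul_nonsing_inv R hR
  have hTT : Rᵀ * (R⁻¹)ᵀ = 1 := by rw [← Matrix.transpose_mul, hRR, Matrix.transpose_one]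
  have hTT' : (R⁻¹)ᵀ * Rᵀ = 1 := by rw [← Matrix.transpose_mul, hRR', Matrix.transpose_one]
  set C : Matrix (Fin (N + 1)) (Fin (N + 1)) ℝ := Rᵀ * Matrix.diagonal w * R with hC
  have hWR : Matrix.diagonal w * R = (R⁻¹)ᵀ * C := by
    rw [hC, ← Matrix.mul_assoc, ← Matrix.mul_assoc, hTT', Matrix.one_mul]
  have hCD : C * Matrix.diagonal d = Matrix.diagonal d * C := by
    have h := hWA
    rw [hdecomp] at h
    have h2 := congrArg (fun M => Rᵀ * M * R) h
    simp only [Matrix.transpose_mul, Matrix.transpose_transpose, Matrix.diagonal_transpose,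
      Matrix.transpose_nonsing_inv] at h2
    calc C * Matrix.diagonal d
        = Rᵀ * (Matrix.diagonal w * (R * Matrix.diagonal d * R⁻¹)) * R := by
          rw [hC]
          simp only [Matrix.mul_assoc]
          rw [hRR, Matrix.mul_one]
      _ = Rᵀ * ((Rᵀ)⁻¹ * (Matrix.diagonal d * (Rᵀ * Matrix.diagonal w))) * R := by
          rw [h2]; simp only [Matrix.mul_assoc]
      _ = Matrix.diagonal d * C := by
          rw [hC, ← Matrix.transpose_nonsing_inv, ← Matrix.mul_assoc, ← Matrix.mul_assoc, hTT,
            Matrix.one_mul]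
          simp only [Matrix.mul_assoc]
  have hCij : ∀ i j, C i j * d j = d i * C i j := by
    intro i j
    have := congrFun (congrFun hCD i) j
    simpa [Matrix.mul_diagonal, Matrix.diagonal_mul] using this
  have hCabs : ∀ i j, C i j ≠ 0 → d i = d j := by
    intro i j h
    have h2 : (d i - d j) * C i j = 0 := by linear_combination - hCij i j
    rcases mul_eq_zero.mp h2 with h3 | h3
    · linarith [sub_eq_zero.mp h3]
    · exact absurd h3 h
  -- contradiction setup
  rw [isUnit_iff_ne_zero]
  intro hdet
  obtain ⟨x, hx0, hxker⟩ := (Matrix.exists_mulVec_eq_zero_iff).2 hdet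
  have hAx : absA *ᵥ x = c • (L *ᵥ x) := by
    have h0 : absA *ᵥ x - (c • L) *ᵥ x = 0 := by
      rw [← Matrix.sub_mulVec]; exact hxker
    rw [sub_eq_zero.mp h0, Matrix.smul_mulVec]
  set y : Fin (N + 1) → ℝ := R⁻¹ *ᵥ x with hy
  set z : Fin (N + 1) → ℝ := fun i => Real.sqrt |d i| * y i with hz
  set q : ℝ := x ⬝ᵥ (Matrix.diagonal w *ᵥ (absA *ᵥ x)) with hq
  -- q as w-form of R z
  have hWabsA : Matrix.diagonal w * absA
      = (R⁻¹)ᵀ * (C * (Matrix.diagonal (fun i => |d i|) * R⁻¹)) := by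
    rw [habs, ← Matrix.mul_assoc, ← Matrix.mul_assoc, ← Matrix.mul_assoc, hWR]
    simp only [Matrix.mul_assoc]
  have hq1 : q = (R *ᵥ z) ⬝ᵥ (Matrix.diagonal w *ᵥ (R *ᵥ z)) := by
    have e1 : q = y ⬝ᵥ (C *ᵥ (Matrix.diagonal (fun i => |d i|) *ᵥ y)) := by
      rw [hq, Matrix.mulVec_mulVec, hWabsA,
        ← Matrix.mulVec_mulVec x ((R⁻¹)ᵀ) (C * ((Matrix.diagonal fun i => |d i|) * R⁻¹)),
        Matrix.dotProduct_mulVec, Matrix.vecMul_transpose, ← hy, hy,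
        Matrix.mulVec_mulVec, Matrix.mulVec_mulVec]
      simp only [Matrix.mul_assoc]
    have e2 : y ⬝ᵥ (C *ᵥ (Matrix.diagonal (fun i => |d i|) *ᵥ y)) = z ⬝ᵥ (C *ᵥ z) := by
      have hdiag : (Matrix.diagonal (fun i => |d i|) *ᵥ y) = fun j => |d j| * y j := by
        funext j; rw [Matrix.mulVec_diagonal]
      rw [hdiag]
      simp only [dotProduct, Matrix.mulVec, dotProduct]
      refine Finset.sum_congr rfl fun i _ => ?_
      rw [Finset.mul_sum, Finset.mul_sum]
      refine Finset.sum_congr rfl fun j _ => ?_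
      by_cases hc0 : C i j = 0
      · simp [hc0]
      · have hd : d i = d j := hCabs i j hc0
        have h2 : Real.sqrt |d j| * Real.sqrt |d j| = |d j| := Real.mul_self_sqrt (abs_nonneg _)
        simp only [hz]
        rw [hd]
        linear_combination (-(y i * C i j * y j)) * h2
    have e3 : z ⬝ᵥ (C *ᵥ z) = (R *ᵥ z) ⬝ᵥ (Matrix.diagonal w *ᵥ (R *ᵥ z)) := by
      rw [hC, ← Matrix.mulVec_mulVec, ← Matrix.mulVec_mulVec, Matrix.dotProduct_mulVec z Rᵀ,
        Matrix.vecMul_transpose]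
    rw [e1, e2, e3]
  have hq2 : 0 ≤ q := by
    rw [hq1, hquad]
    exact Finset.sum_nonneg fun i _ => mul_nonneg (hwpos i).le (sq_nonneg _)
  have hq3 : q = ∑ i : Fin (N + 1), (if (i:ℕ) < 3 then (0:ℝ) else -(c * w i * x i ^ 2)) := by
    rw [hq, hAx, hL]
    simp only [dotProduct, Matrix.mulVec_diagonal, Pi.smul_apply, smul_eq_mul]
    refine Finset.sum_congr rfl (fun i _ => ?_)
    by_cases h : (i:ℕ) < 3 <;> simp only [h, if_true, if_false] <;> ring
  have hq4 : q ≤ 0 := by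
    rw [hq3]
    refine Finset.sum_nonpos fun i _ => ?_
    by_cases h : (i:ℕ) < 3 <;> simp only [h, if_true, if_false, le_refl, neg_nonpos]
    positivity
  have hq0 : q = 0 := le_antisymm hq4 hq2
  -- x vanishes on indices ≥ 3
  have hterm : ∀ i : Fin (N + 1), 3 ≤ (i:ℕ) → x i = 0 := by
    have hsum : ∑ i : Fin (N + 1), (if (i:ℕ) < 3 then (0:ℝ) else c * w i * x i ^ 2) = 0 := by
      have h1 : ∑ i : Fin (N + 1), (if (i:ℕ) < 3 then (0:ℝ) else c * w i * x i ^ 2)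
          = -(∑ i : Fin (N + 1), (if (i:ℕ) < 3 then (0:ℝ) else -(c * w i * x i ^ 2))) := by
        rw [← Finset.sum_neg_distrib]
        refine Finset.sum_congr rfl fun i _ => ?_
        by_cases h : (i:ℕ) < 3 <;> simp [h]
      rw [h1, ← hq3, hq0, neg_zero]
    intro i hi
    have hall := (Finset.sum_eq_zero_iff_of_nonneg (fun i _ => by
      by_cases h : (i:ℕ) < 3
      · simp [h]
      · simp only [h, if_false]
        positivity)).mp hsum i (Finset.mem_univ i)
    rw [if_neg (by omega)] at hall
    have hw' := hwpos i
    have h2 : x i ^ 2 = 0 := by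
      rcases mul_eq_zero.mp hall with h3 | h3
      · rcases mul_eq_zero.mp h3 with h4 | h4 <;> nlinarith
      · exact h3
    exact pow_eq_zero_iff (n := 2) (by norm_num) |>.mp h2
  -- R z = 0, hence z = 0
  have hRz : R *ᵥ z = 0 := by
    have h0 : ∑ i, w i * (R *ᵥ z) i ^ 2 = 0 := by rw [← hquad, ← hq1, hq0]
    funext i
    have hall := (Finset.sum_eq_zero_iff_of_nonneg (fun i _ =>
      mul_nonneg (hwpos i).le (sq_nonneg _))).mp h0 i (Finset.mem_univ i)
    have hw' := hwpos i
    show (R *ᵥ z) i = 0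
    have h2 : (R *ᵥ z) i ^ 2 = 0 := by
      rcases mul_eq_zero.mp hall with h3 | h3
      · nlinarith
      · exact h3
    exact pow_eq_zero_iff (n := 2) (by norm_num) |>.mp h2
  have hzz : z = 0 := by
    have h0 : R⁻¹ *ᵥ (R *ᵥ z) = z := by rw [Matrix.mulVec_mulVec, hRR, Matrix.one_mulVec]
    rw [hRz, Matrix.mulVec_zero] at h0; exact h0.symm
  have hDy : Matrix.diagonal (fun i => |d i|) *ᵥ y = 0 := by
    funext i
    have hzi : Real.sqrt |d i| * y i = 0 := congrFun hzz i
    have h1 : |d i| * y i = 0 := by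
      have h2 := congrArg (fun t => Real.sqrt |d i| * t) hzi
      simp only [mul_zero, ← mul_assoc] at h2
      rw [← Real.mul_self_sqrt (abs_nonneg (d i))]
      exact h2
    simpa [Matrix.mulVec_diagonal] using h1
  have hAx0 : absA *ᵥ x = 0 := by
    rw [habs, ← Matrix.mulVec_mulVec, ← Matrix.mulVec_mulVec, ← hy, hDy, Matrix.mulVec_zero]
  exact hx0 (hker x hterm hAx0)
end

section
/- The vector ℓ = (2, 0, -1, -2(1 - 2e^{iη}), 0, 1 - 2e^{iη}) satisfies ℓ·Q = 0 when λ₀ = 1/(5 - 4cos η), where Q is the 6×6 matrix of the BSGS Fourier analysis. -/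
open Real Complex Matrix

private lemma cv5 {α : Type*} (a b c d f g : α) :
    (![a, b, c, d, f, g] : Fin 6 → α) 5 = g := rfl

private lemma vecMul_smul' {n m : ℕ} (a : ℂ) (v : Fin n → ℂ) (M : Matrix (Fin n) (Fin m) ℂ) :
    v ᵥ* (a • M) = a • (v ᵥ* M) := by
  funext j
  simp [Matrix.vecMul, dotProduct, Finset.mul_sum, mul_left_comm]

/-- The vector `ℓ = (2, 0, -1, -2(1-2e^{iη}), 0, 1-2e^{iη})` is a left null vector of
the 6×6 matrix `Q` of the BSGS Fourier analysis when `λ₀ = 1/(5 - 4 cos η)`. -/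
theorem stmt_15 (η : ℝ) (hη : η ∈ Set.Ioo 0 (2 * π))
    (lam0 : ℂ) (hlam0 : lam0 = 1 / (5 - 4 * Real.cos η))
    (e em sp s2 : ℂ)
    (he : e = Complex.exp (η * Complex.I))
    (hem : em = Complex.exp (-(η * Complex.I)))
    (hsp : sp = (Real.sqrt (π / 2) : ℝ))
    (hs2 : s2 = (Real.sqrt (2 * π) : ℝ))
    (Q : Matrix (Fin 6) (Fin 6) ℂ)
    (hQ : Q = (1 / s2) •
      !![lam0 * (2 - em), -lam0 * sp * em, lam0 * (2 - em), -e, sp * e, -e;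
         -lam0 * sp * em, 2 * lam0 * (2 - em), -lam0 * s2 * em, sp * e, -2 * e, s2 * e;
         lam0 * (2 - em), -lam0 * s2 * em, 5 * lam0 * (2 - em), -e, s2 * e, -5 * e;
         -lam0 * em, -lam0 * sp * em, -lam0 * em, lam0 * (2 - e), lam0 * sp * e, lam0 * (2 - e);
         -lam0 * sp * em, -2 * lam0 * em, -lam0 * s2 * em, lam0 * sp * e, 2 * lam0 * (2 - e), lam0 * s2 * e;
         -lam0 * em, -lam0 * s2 * em, -5 * lam0 * em, lam0 * (2 - e), lam0 * s2 * e, 5 * lam0 * (2 - e)])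
    (ℓ : Fin 6 → ℂ)
    (hℓ : ℓ = ![2, 0, -1, -2 * (1 - 2 * e), 0, 1 - 2 * e]) :
    ℓ ᵥ* Q = 0 := by
  have hee : e * em = 1 := by
    rw [he, hem, ← Complex.exp_add]; simp
  have hcosr : (5 - 4 * Real.cos η : ℝ) ≠ 0 := by
    have := Real.cos_le_one η
    nlinarith
  have hcos : ((5 - 4 * Real.cos η : ℝ) : ℂ) = 5 - 2 * e - 2 * em := by
    rw [Complex.ofReal_sub, Complex.ofReal_mul, Complex.ofReal_cos, Complex.cos, ← he,
      show Complex.exp (-(η : ℂ) * Complex.I) = em by rw [hem, neg_mul]]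
    push_cast
    ring
  have hcne : ((5 - 4 * Real.cos η : ℝ) : ℂ) ≠ 0 := by exact_mod_cast hcosr
  have hlam : lam0 * (5 - 2 * e - 2 * em) = 1 := by
    rw [hlam0, show (5 : ℂ) - 4 * (Real.cos η : ℂ) = ((5 - 4 * Real.cos η : ℝ) : ℂ) by
      push_cast; ring, hcos, one_div, inv_mul_cancel₀ (hcos ▸ hcne)]
  have hsr : Real.sqrt (2 * π) = 2 * Real.sqrt (π / 2) := by
    rw [show (2 * π : ℝ) = (π / 2) * 2 ^ 2 by ring,
      Real.sqrt_mul (by positivity), Real.sqrt_sq (by norm_num)]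
    ring
  have hs2sp : s2 = 2 * sp := by rw [hs2, hsp, hsr]; push_cast; ring
  subst hQ hℓ
  rw [vecMul_smul', show (0 : Fin 6 → ℂ) = (1/s2) • (0 : Fin 6 → ℂ) by simp]
  congr 1
  funext i
  fin_cases i
  · simp [Matrix.vecMul, dotProduct, Fin.sum_univ_six, cv5, Matrix.of_apply, -Matrix.cons_val']
    linear_combination (-2 * lam0) * hee
  · simp [Matrix.vecMul, dotProduct, Fin.sum_univ_six, cv5, Matrix.of_apply, -Matrix.cons_val']
    linear_combination (2 * em * sp - em * s2) * hlam +
      (5 * em * lam0 - 2 * em ^ 2 * lam0 - em) * hs2sp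
  · simp [Matrix.vecMul, dotProduct, Fin.sum_univ_six, cv5, Matrix.of_apply, -Matrix.cons_val']
    linear_combination (6 * lam0) * hee
  · simp [Matrix.vecMul, dotProduct, Fin.sum_univ_six, cv5, Matrix.of_apply, -Matrix.cons_val']
    linear_combination e * hlam + (2 * lam0) * hee
  · simp [Matrix.vecMul, dotProduct, Fin.sum_univ_six, cv5, Matrix.of_apply, -Matrix.cons_val']
    linear_combination
      (2 * s2 - 4 * sp - em * s2 + 2 * em * sp + e * s2 - 2 * e * sp) * hlam +
      (2 - 10 * lam0 - em + 9 * em * lam0 - 2 * em ^ 2 * lam0) * hs2sp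
  · simp [Matrix.vecMul, dotProduct, Fin.sum_univ_six, cv5, Matrix.of_apply, -Matrix.cons_val']
    linear_combination (-3 * e) * hlam + (-6 * lam0) * hee
end
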